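/- Every monotone transmission α: U → V between ordered supertropical monoids is a semiring homomorphism (with respect to the forced additions on U and V). -/

import Mathlib

/-!
Write `x + y` for the forced addition. If `e x = e y`, both `α (x + y)` and `α x + α y` equal
`e α x`. If `e x < e y`, then `x + y = y` and `e α x ≤ e α y`; the only issue is the collapse
`e α x = e α y`, where `α x + α y = e α y` and we must show that `α y` is ghost. Since `1 ≤ e`
in the total order of `U`, `y ≤ e x` would force `e y ≤ e x`; hence `e x ≤ y`, and monotonicity
gives `e α y = α (e x) ≤ α y ≤ e α y`.
-/

universe u v w

class STM (U : Type u) extends CommMonoid U, Zero U where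
  zero_mul' : ∀ x : U, 0 * x = 0
  e : U
  e_idem : e * e = e
  ghost_zero : ∀ x : U, e * x = 0 → x = 0
  le : U → U → Prop
  le_refl : ∀ x : U, le x x
  le_trans : ∀ x y z : U, le x y → le y z → le x z
  le_total : ∀ x y : U, le x y ∨ le y x
  le_antisymm : ∀ x y : U, e * x = x → e * y = y → le x y → le y x → x = y
  le_e : ∀ x y : U, le x y ↔ le (e * x) (e * y)
  mul_le_mul : ∀ x y z : U, le x y → le (x * z) (y * z)
  zero_le : ∀ x : U, le 0 x

namespace STM

variable {U : Type u} [STM U]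

/-- `x` is a ghost element, i.e. `x ∈ eU`. -/
def Ghost (x : U) : Prop := e * x = x

/-- strict inequality for the ordering of the ghost ideal -/
def slt (x y : U) : Prop := le x y ∧ ¬ le y x

open scoped Classical in
/-- the forced addition on a supertropical monoid -/
noncomputable def add (x y : U) : U :=
  if slt (e * x) (e * y) then y
  else if slt (e * y) (e * x) then x
  else e * x

/-- the supertropical monoid `U` "is" a (supertropical) semiring: the forced
addition is associative and distributive. -/
def IsSemiring (U : Type u) [STM U] : Prop :=
  (∀ x y z : U, add (add x y) z = add x (add y z)) ∧
  (∀ x y z : U, add x y * z = add (x * z) (y * z))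

end STM

open STM

/-- A transmission between supertropical monoids. -/
structure IsTransmission {U : Type u} {V : Type v} [STM U] [STM V] (α : U → V) : Prop where
  map_zero : α 0 = 0
  map_one : α 1 = 1
  map_mul : ∀ x y : U, α (x * y) = α x * α y
  map_e : α (STM.e : U) = (STM.e : V)
  mono : ∀ x y : U, Ghost x → Ghost y → STM.le x y → STM.le (α x) (α y)


/-- `r` makes the supertropical monoid `U` an ordered supertropical monoid. -/
structure IsOST {U : Type u} [STM U] (r : U → U → Prop) : Prop where
  refl : ∀ x : U, r x x
  trans : ∀ x y z : U, r x y → r y z → r x z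
  antisymm : ∀ x y : U, r x y → r y x → x = y
  total : ∀ x y : U, r x y ∨ r y x
  mul_right : ∀ x y z : U, r x y → r (x * z) (y * z)
  restrict : ∀ x y : U, Ghost x → Ghost y → (r x y ↔ STM.le x y)
  zero_one : r 0 1
  one_e : r 1 (STM.e : U)

namespace STM

variable {U : Type u} [STM U]

lemma ghost_e_mul (x : U) : Ghost (e * x) := by
  rw [Ghost, ← mul_assoc, e_idem]

lemma add_eq_right_of_slt {x y : U} (h : slt (e * x) (e * y)) : add x y = y := by
  rw [add, if_pos h]

lemma add_eq_e_mul_of_e_mul_eq {x y : U} (h : e * x = e * y) : add x y = e * x := by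
  have hle : le (e * x) (e * y) := h ▸ le_refl _
  have hge : le (e * y) (e * x) := h ▸ le_refl _
  rw [add, if_neg fun h' => h'.2 hge, if_neg fun h' => h'.2 hle]

lemma slt_or_eq_or_slt_e_mul (x y : U) :
    slt (e * x) (e * y) ∨ e * x = e * y ∨ slt (e * y) (e * x) := by
  by_cases hxy : le (e * x) (e * y) <;> by_cases hyx : le (e * y) (e * x)
  · exact Or.inr (Or.inl (le_antisymm _ _ (ghost_e_mul x) (ghost_e_mul y) hxy hyx))
  · exact Or.inl ⟨hxy, hyx⟩
  · exact Or.inr (Or.inr ⟨hyx, hxy⟩)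
  · exact ((le_total _ _).elim hxy hyx).elim

lemma add_comm (x y : U) : add x y = add y x := by
  rcases slt_or_eq_or_slt_e_mul x y with h | h | h
  · rw [add_eq_right_of_slt h, add, if_neg fun h' => h.2 h'.1, if_pos h]
  · rw [add_eq_e_mul_of_e_mul_eq h, add_eq_e_mul_of_e_mul_eq h.symm, h]
  · rw [add_eq_right_of_slt h, add, if_neg fun h' => h.2 h'.1, if_pos h]

end STM

namespace IsOST

variable {U : Type u} [STM U] {r : U → U → Prop}

lemma le_e_mul (hr : IsOST r) (x : U) : r x (e * x) := by
  simpa using hr.mul_right 1 e x hr.one_e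

lemma e_mul_le_of_slt (hr : IsOST r) {x y : U} (h : slt (e * x) (e * y)) : r (e * x) y := by
  refine (hr.total _ _).resolve_right fun hyx => h.2 ?_
  have hghost := hr.mul_right _ _ e hyx
  rw [mul_comm y, mul_comm (e * x), ← mul_assoc, e_idem] at hghost
  exact (hr.restrict _ _ (ghost_e_mul y) (ghost_e_mul x)).1 hghost

end IsOST

namespace IsTransmission

variable {U : Type u} {V : Type v} [STM U] [STM V] {α : U → V}

lemma map_e_mul (hα : IsTransmission α) (x : U) : α (e * x) = e * α x := by
  rw [hα.map_mul, hα.map_e]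

lemma e_mul_le_e_mul (hα : IsTransmission α) {x y : U} (h : le (e * x) (e * y)) :
    le (e * α x) (e * α y) := by
  simpa only [hα.map_e_mul] using hα.mono _ _ (ghost_e_mul x) (ghost_e_mul y) h

lemma add_eq_right_of_slt {rU : U → U → Prop} {rV : V → V → Prop} (hrU : IsOST rU)
    (hrV : IsOST rV) (hα : IsTransmission α) (hmono : ∀ x y : U, rU x y → rV (α x) (α y))
    {x y : U} (h : slt (e * x) (e * y)) : add (α x) (α y) = α y := by
  have hle := hα.e_mul_le_e_mul h.1
  by_cases hge : le (e * α y) (e * α x)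
  · have hcollapse : e * α x = e * α y :=
      STM.le_antisymm _ _ (ghost_e_mul _) (ghost_e_mul _) hle hge
    have hbelow : rV (e * α x) (α y) := hα.map_e_mul x ▸ hmono _ _ (hrU.e_mul_le_of_slt h)
    have habove : rV (α y) (e * α x) := hcollapse ▸ hrV.le_e_mul (α y)
    rw [add_eq_e_mul_of_e_mul_eq hcollapse, hrV.antisymm _ _ habove hbelow]
  · exact STM.add_eq_right_of_slt ⟨hle, hge⟩

end IsTransmission

/-- Every monotone transmission between ordered supertropical monoids is a semiring
homomorphism for the forced additions. -/
theorem monotone_transmission_is_hom {U : Type u} {V : Type v} [STM U] [STM V]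
    (rU : U → U → Prop) (rV : V → V → Prop) (hrU : IsOST rU) (hrV : IsOST rV)
    (α : U → V) (hα : IsTransmission α)
    (hmono : ∀ x y : U, rU x y → rV (α x) (α y)) :
    α 0 = 0 ∧ α 1 = 1 ∧ (∀ x y : U, α (x * y) = α x * α y) ∧
      ∀ x y : U, α (add x y) = add (α x) (α y) := by
  refine ⟨hα.map_zero, hα.map_one, hα.map_mul, fun x y => ?_⟩
  rcases slt_or_eq_or_slt_e_mul x y with h | h | h
  · rw [add_eq_right_of_slt h, hα.add_eq_right_of_slt hrU hrV hmono h]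
  · have hV : e * α x = e * α y := by rw [← hα.map_e_mul, ← hα.map_e_mul, h]
    rw [add_eq_e_mul_of_e_mul_eq h, add_eq_e_mul_of_e_mul_eq hV, hα.map_e_mul]
  · rw [STM.add_comm, add_eq_right_of_slt h, STM.add_comm,
      hα.add_eq_right_of_slt hrU hrV hmono h]
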